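/- In the Gray digit space, every equivalence class of the relation α ∼_G β ⟺ ⟦α⟧_G = ⟦β⟧_G contains at most two elements, and if it contains two distinct elements then they differ in exactly one position. -/
import Mathlib


/-- `seqComp α n` is the composition `α 0 ∘ α 1 ∘ ⋯ ∘ α (n-1)`. -/
def seqComp {X : Type*} (α : ℕ → X → X) : ℕ → X → X
  | 0 => id
  | n + 1 => seqComp α n ∘ α n

/-- The Gray digit `gᵢ(x) = -i·(x-1)/2`. -/
noncomputable def gmap (i : ℝ) (x : ℝ) : ℝ := -i * (x - 1) / 2

/-- A sequence of Gray digits. -/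
def GrayValid (α : ℕ → ℝ → ℝ) : Prop := ∀ n, α n = gmap (-1) ∨ α n = gmap 1

namespace Stmt9Aux

open Set

lemma gmapn (x : ℝ) : gmap (-1) x = (x - 1) / 2 := by unfold gmap; ring

lemma gmapp (x : ℝ) : gmap 1 x = (1 - x) / 2 := by unfold gmap; ring

lemma valid_inj {α : ℕ → ℝ → ℝ} (h : GrayValid α) (n : ℕ) :
    Function.Injective (α n) := by
  rcases h n with h' | h' <;> rw [h'] <;> intro x y hxy
  · rw [gmapn, gmapn] at hxy; linarith
  · rw [gmapp, gmapp] at hxy; linarith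

lemma seqComp_succ {X : Type*} (α : ℕ → X → X) (n : ℕ) :
    seqComp α (n + 1) = seqComp α n ∘ α n := rfl

lemma seqComp_inj {α : ℕ → ℝ → ℝ} (h : GrayValid α) (n : ℕ) :
    Function.Injective (seqComp α n) := by
  induction n with
  | zero => exact fun x y h => h
  | succ n ih => exact ih.comp (valid_inj h n)

lemma seqComp_add {X : Type*} (α : ℕ → X → X) (i : ℕ) :
    ∀ m, seqComp α (i + m) = seqComp α i ∘ seqComp (fun k => α (i + k)) m
  | 0 => rfl
  | m + 1 => by
    have h1 : i + (m + 1) = (i + m) + 1 := by omega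
    rw [h1, seqComp_succ, seqComp_add α i m, seqComp_succ]
    rfl

lemma eq_one_of_zero {α : ℕ → ℝ → ℝ} (h : GrayValid α) (n : ℕ) {z : ℝ}
    (hz : α n z = 0) : z = 1 := by
  rcases h n with h' | h' <;> rw [h'] at hz
  · rw [gmapn] at hz; linarith
  · rw [gmapp] at hz; linarith

lemma first_neg {ε : ℕ → ℝ → ℝ} (hv : GrayValid ε)
    (h : (-1 : ℝ) ∈ seqComp ε 1 '' Icc (-1 : ℝ) 1) : ε 0 = gmap (-1) := by
  rcases hv 0 with h0 | h0
  · exact h0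
  · exfalso
    obtain ⟨x, hx, hx1⟩ := h
    have hx2 : ε 0 x = -1 := hx1
    rw [h0, gmapp] at hx2
    linarith [hx.2]

lemma allNeg : ∀ (k : ℕ) (ε : ℕ → ℝ → ℝ), GrayValid ε →
    (∀ m, (-1 : ℝ) ∈ seqComp ε m '' Icc (-1 : ℝ) 1) → ε k = gmap (-1) := by
  intro k
  induction k with
  | zero => intro ε hv h; exact first_neg hv (h 1)
  | succ k ih =>
    intro ε hv h
    have h0 : ε 0 = gmap (-1) := first_neg hv (h 1)
    have h' : ∀ m, (-1 : ℝ) ∈ seqComp (fun j => ε (1 + j)) m '' Icc (-1 : ℝ) 1 := by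
      intro m
      obtain ⟨x, hx, hx1⟩ := h (1 + m)
      rw [seqComp_add ε 1 m] at hx1
      refine ⟨x, hx, ?_⟩
      have h2 : ε 0 (seqComp (fun j => ε (1 + j)) m x) = -1 := hx1
      rw [h0, gmapn] at h2
      linarith
    have h3 := ih (fun j => ε (1 + j)) (fun n => hv (1 + n)) h'
    rw [Nat.add_comm]
    exact h3

lemma tail_one {ε : ℕ → ℝ → ℝ} (hv : GrayValid ε)
    (h : ∀ m, (1 : ℝ) ∈ seqComp ε m '' Icc (-1 : ℝ) 1) :
    ε 0 = gmap 1 ∧ ∀ k, ε (k + 1) = gmap (-1) := by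
  have h0 : ε 0 = gmap 1 := by
    rcases hv 0 with h' | h'
    · exfalso
      obtain ⟨x, hx, hx1⟩ := h 1
      have hx2 : ε 0 x = 1 := hx1
      rw [h', gmapn] at hx2
      linarith [hx.2]
    · exact h'
  refine ⟨h0, fun k => ?_⟩
  have h' : ∀ m, (-1 : ℝ) ∈ seqComp (fun j => ε (1 + j)) m '' Icc (-1 : ℝ) 1 := by
    intro m
    obtain ⟨x, hx, hx1⟩ := h (1 + m)
    rw [seqComp_add ε 1 m] at hx1
    refine ⟨x, hx, ?_⟩
    have h2 : ε 0 (seqComp (fun j => ε (1 + j)) m x) = 1 := hx1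
    rw [h0, gmapp] at h2
    linarith
  have h3 := allNeg k (fun j => ε (1 + j)) (fun n => hv (1 + n)) h'
  rw [Nat.add_comm]
  exact h3

lemma seqComp_congr {α β : ℕ → ℝ → ℝ} : ∀ n, (∀ j < n, α j = β j) →
    seqComp α n = seqComp β n
  | 0, _ => rfl
  | n + 1, h => by
    rw [seqComp_succ, seqComp_succ,
      seqComp_congr n (fun j hj => h j (Nat.lt_succ_of_lt hj)),
      h n (Nat.lt_succ_self n)]

lemma tail_det (val : (ℕ → ℝ → ℝ) → ℝ)
    (hval : ∀ α : ℕ → ℝ → ℝ, GrayValid α →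
      ∀ n : ℕ, val α ∈ seqComp α n '' Set.Icc (-1) 1)
    {α : ℕ → ℝ → ℝ} (hα : GrayValid α) (i : ℕ)
    (h0 : val α = seqComp α i 0) :
    α (i + 1) = gmap 1 ∧ ∀ k, α (i + 2 + k) = gmap (-1) := by
  have hδv : GrayValid (fun k => α (i + 1 + k)) := fun n => hα (i + 1 + n)
  have hone : ∀ m, (1 : ℝ) ∈ seqComp (fun k => α (i + 1 + k)) m '' Icc (-1 : ℝ) 1 := by
    intro m
    obtain ⟨x, hx, hx1⟩ := hval α hα (i + 1 + m)
    rw [seqComp_add α (i + 1) m] at hx1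
    have h2 : seqComp α i (α i (seqComp (fun k => α (i + 1 + k)) m x)) = seqComp α i 0 := by
      rw [← h0]; exact hx1
    have h3 : α i (seqComp (fun k => α (i + 1 + k)) m x) = 0 := seqComp_inj hα i h2
    exact ⟨x, hx, eq_one_of_zero hα i h3⟩
  obtain ⟨ha, hb⟩ := tail_one hδv hone
  refine ⟨ha, fun k => ?_⟩
  rw [show i + 2 + k = i + 1 + (k + 1) from by omega]
  exact hb k

lemma val_eq (val : (ℕ → ℝ → ℝ) → ℝ)
    (hval : ∀ α : ℕ → ℝ → ℝ, GrayValid α →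
      ∀ n : ℕ, val α ∈ seqComp α n '' Set.Icc (-1) 1)
    {α β : ℕ → ℝ → ℝ} (hα : GrayValid α) (hβ : GrayValid β)
    (heq : val α = val β) (i : ℕ)
    (hpre : seqComp α i = seqComp β i) (ha : α i = gmap (-1)) (hb : β i = gmap 1) :
    val α = seqComp α i 0 ∧ val β = seqComp β i 0 := by
  obtain ⟨x, hx, hx1⟩ := hval α hα (i + 1)
  obtain ⟨y, hy, hy1⟩ := hval β hβ (i + 1)
  have hx1' : seqComp α i (α i x) = val α := hx1
  have hy1' : seqComp β i (β i y) = val β := hy1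
  rw [← hpre] at hy1'
  have hab : α i x = β i y := seqComp_inj hα i (by rw [hx1', hy1', heq])
  have hxle : α i x ≤ 0 := by rw [ha, gmapn]; linarith [hx.2]
  have hyge : (0 : ℝ) ≤ β i y := by rw [hb, gmapp]; linarith [hy.2]
  have h0 : α i x = 0 := le_antisymm hxle (hab ▸ hyge)
  constructor
  · rw [← hx1', h0]
  · rw [← hy1', ← hab, h0, hpre]

lemma part2 (val : (ℕ → ℝ → ℝ) → ℝ)
    (hval : ∀ α : ℕ → ℝ → ℝ, GrayValid α →
      ∀ n : ℕ, val α ∈ seqComp α n '' Set.Icc (-1) 1)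
    {α β : ℕ → ℝ → ℝ} (hα : GrayValid α) (hβ : GrayValid β)
    (heq : val α = val β) (hne : α ≠ β) : ∃! i : ℕ, α i ≠ β i := by
  classical
  have hex : ∃ i, α i ≠ β i := by
    by_contra h; push_neg at h; exact hne (funext h)
  set i := Nat.find hex with hi
  have hdiff : α i ≠ β i := Nat.find_spec hex
  have hmin : ∀ j < i, α j = β j := fun j hj => not_not.mp (Nat.find_min hex hj)
  have hpre : seqComp α i = seqComp β i := seqComp_congr i hmin
  have htails : α (i + 1) = β (i + 1) ∧ ∀ k, α (i + 2 + k) = β (i + 2 + k) := by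
    rcases hα i with ha | ha <;> rcases hβ i with hb | hb
    · exact absurd (ha.trans hb.symm) hdiff
    · obtain ⟨h0a, h0b⟩ := val_eq val hval hα hβ heq i hpre ha hb
      obtain ⟨ta1, ta2⟩ := tail_det val hval hα i h0a
      obtain ⟨tb1, tb2⟩ := tail_det val hval hβ i h0b
      exact ⟨ta1.trans tb1.symm, fun k => (ta2 k).trans (tb2 k).symm⟩
    · obtain ⟨h0b, h0a⟩ := val_eq val hval hβ hα heq.symm i hpre.symm hb ha
      obtain ⟨ta1, ta2⟩ := tail_det val hval hα i h0a
      obtain ⟨tb1, tb2⟩ := tail_det val hval hβ i h0b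
      exact ⟨ta1.trans tb1.symm, fun k => (ta2 k).trans (tb2 k).symm⟩
    · exact absurd (ha.trans hb.symm) hdiff
  refine ⟨i, hdiff, fun j hj => ?_⟩
  by_contra hji
  rcases lt_or_gt_of_ne hji with h | h
  · exact hj (hmin j h)
  · obtain ⟨k, rfl⟩ : ∃ k, j = i + 1 + k := ⟨j - (i + 1), by omega⟩
    cases k with
    | zero => exact hj htails.1
    | succ k =>
      refine hj ?_
      have h2 := htails.2 k
      rwa [show i + 2 + k = i + 1 + (k + 1) from by omega] at h2

end Stmt9Aux

open Stmt9Aux in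
/-- In the Gray digit space, with `val` the coding map (`val α` belongs to every set
`(α 0 ∘ ⋯ ∘ α (n-1))[I]`): every equivalence class of `α ∼_G β ⟺ val α = val β`
contains at most two elements, and if it contains two distinct elements then they differ
in exactly one position. -/
theorem stmt9 (val : (ℕ → ℝ → ℝ) → ℝ)
    (hval : ∀ α : ℕ → ℝ → ℝ, GrayValid α →
      ∀ n : ℕ, val α ∈ seqComp α n '' Set.Icc (-1) 1) :
    (∀ α β γ : ℕ → ℝ → ℝ, GrayValid α → GrayValid β → GrayValid γ →
      val α = val β → val β = val γ → (α = β ∨ β = γ ∨ α = γ)) ∧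
    (∀ α β : ℕ → ℝ → ℝ, GrayValid α → GrayValid β →
      val α = val β → α ≠ β → ∃! i : ℕ, α i ≠ β i) := by
  constructor
  · intro α β γ hα hβ hγ hab hbc
    by_cases h1 : α = β
    · exact Or.inl h1
    by_cases h2 : β = γ
    · exact Or.inr (Or.inl h2)
    right; right
    obtain ⟨i, hi, hiu⟩ := part2 val hval hα hβ hab h1
    obtain ⟨j, hj, hju⟩ := part2 val hval hβ hγ hbc h2
    have hac : val α = val γ := hab.trans hbc
    have hij : i = j := by
      by_contra hne
      have hβγi : β i = γ i := by
        by_contra h; exact hne (hju i h)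
      have hαβj : α j = β j := by
        by_contra h; exact hne ((hiu j h).symm)
      have hαγ : α ≠ γ := fun h => hi ((congrFun h i).trans hβγi.symm)
      obtain ⟨k, hk, hku⟩ := part2 val hval hα hγ hac hαγ
      have hki : i = k := hku i (show α i ≠ γ i by rw [← hβγi]; exact hi)
      have hkj : j = k := hku j (show α j ≠ γ j by rw [hαβj]; exact hj)
      exact hne (hki.trans hkj.symm)
    subst hij
    funext k
    by_cases hk : k = i
    · subst hk
      rcases hα k with ha | ha <;> rcases hγ k with hc | hc
      · exact ha.trans hc.symm
      · rcases hβ k with hb | hb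
        · exact absurd (ha.trans hb.symm) hi
        · exact absurd (hc.trans hb.symm).symm hj
      · rcases hβ k with hb | hb
        · exact absurd (hc.trans hb.symm).symm hj
        · exact absurd (ha.trans hb.symm) hi
      · exact ha.trans hc.symm
    · have h1 : α k = β k := not_not.mp (fun h => hk (hiu k h))
      have h2 : β k = γ k := not_not.mp (fun h => hk (hju k h))
      exact h1.trans h2
  · intro α β hα hβ heq hne
    exact part2 val hval hα hβ heq hne
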